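/- For all integers $k, n \ge 2$, $\int_{-1}^{1} \tilde P_k(z)\,\tilde P_n(z)\,dz = c_n\,\delta_{kn}$, where $c_n = \frac{2n(n+1)}{(n-1)(n+2)(2n+1)}$ and $\delta_{kn}$ is the Kronecker delta. -/

import Mathlib

/-- Legendre polynomials via Rodrigues' formula:
`P_n(z) = (1 / (2^n n!)) dⁿ/dzⁿ [(z²-1)ⁿ]`. -/
noncomputable def legendreP (n : ℕ) (z : ℝ) : ℝ :=
  (1 / (2 ^ n * (Nat.factorial n) : ℝ)) * iteratedDeriv n (fun x : ℝ => (x ^ 2 - 1) ^ n) z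

/-- `P̃_n(z) = (1/(n+2)) (n P_n(z) - (2/(n-1)) P_{n-1}'(z))` for `n ≥ 2`. -/
noncomputable def tildeP (n : ℕ) (z : ℝ) : ℝ :=
  (1 / ((n : ℝ) + 2)) *
    ((n : ℝ) * legendreP n z - (2 / ((n : ℝ) - 1)) * deriv (legendreP (n - 1)) z)

/-! Both sides are integrals of polynomials. Integrating by parts `n` times in Rodrigues' formula
shows that `P_n` is orthogonal to every polynomial of degree `< n`; one more integration by parts
gives `∫ q P_m' = q(1) - (-1)^m q(-1)` whenever `deg q ≤ m`. Since `P_m'(1) = m(m+1)/2` and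
`P_m'(-1) = (-1)^(m+1) P_m'(1)`, the normalisation of `P̃_n` is exactly the one making
`P̃_n(±1) = 0`, so for `k < n` both terms of `∫ P̃_k P̃_n` vanish. On the diagonal the same two
facts reduce everything to `∫ P_n² = 2/(2n+1)`, which follows from `∫ P_n P_{n+1}' = 2`
because `P_{n+1}' - (2n+1) P_n` has degree `< n`. -/

open Polynomial intervalIntegral Nat

theorem Polynomial.iteratedDeriv_eval {𝕜 : Type*} [NontriviallyNormedField 𝕜] (p : 𝕜[X]) (k : ℕ) :
    iteratedDeriv k (fun x => p.eval x) = fun x => (derivative^[k] p).eval x := by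
  induction k with
  | zero => rfl
  | succ k ih =>
    ext x
    rw [iteratedDeriv_succ, ih, Function.iterate_succ_apply']
    exact Polynomial.deriv _

theorem Polynomial.iterate_derivative_comp_neg_X {R : Type*} [CommRing R] (p : R[X]) (k : ℕ) :
    derivative^[k] (p.comp (-X)) = (-1) ^ k * (derivative^[k] p).comp (-X) := by
  induction k generalizing p with
  | zero => simp
  | succ k ih => simp [ih (derivative p), derivative_comp, pow_succ]

theorem Polynomial.eval_iterate_derivative_X_sub_C_pow_mul {R : Type*} [CommRing R]
    (c : R) (n j : ℕ) (g : R[X]) :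
    (derivative^[n + j] ((X - C c) ^ n * g)).eval c =
      (n + j).choose j * n ! * (derivative^[j] g).eval c := by
  rw [iterate_derivative_mul, eval_finsetSum, Finset.sum_eq_single j]
  · rw [Nat.add_sub_cancel, iterate_derivative_X_sub_pow_self]
    simp [mul_assoc]
  · intro k hk hkj
    rw [Finset.mem_range] at hk
    rw [iterate_derivative_X_sub_pow]
    rcases lt_or_gt_of_ne hkj with hlt | hgt
    · simp [Nat.descFactorial_eq_zero_iff_lt.mpr (by omega : n < n + j - k)]
    · simp [zero_pow (by omega : n - (n + j - k) ≠ 0)]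
  · simp

noncomputable def l2Pairing : LinearMap.BilinForm ℝ ℝ[X] :=
  LinearMap.mk₂ ℝ (fun p q => ∫ x in (-1 : ℝ)..1, p.eval x * q.eval x)
    (fun p₁ p₂ q => by
      simp only [eval_add, add_mul]
      exact integral_add (Continuous.intervalIntegrable (by fun_prop) _ _)
        (Continuous.intervalIntegrable (by fun_prop) _ _))
    (fun c p q => by simp only [eval_smul, smul_eq_mul, mul_assoc, integral_const_mul])
    (fun p q₁ q₂ => by
      simp only [eval_add, mul_add]
      exact integral_add (Continuous.intervalIntegrable (by fun_prop) _ _)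
        (Continuous.intervalIntegrable (by fun_prop) _ _))
    (fun c p q => by simp only [eval_smul, smul_eq_mul, mul_left_comm, integral_const_mul])

theorem l2Pairing_apply (p q : ℝ[X]) :
    l2Pairing p q = ∫ x in (-1 : ℝ)..1, p.eval x * q.eval x := rfl

theorem l2Pairing_comm (p q : ℝ[X]) : l2Pairing p q = l2Pairing q p := by
  simp only [l2Pairing_apply, mul_comm]

theorem l2Pairing_derivative_right (p q : ℝ[X]) :
    l2Pairing p (derivative q) =
      p.eval 1 * q.eval 1 - p.eval (-1) * q.eval (-1) - l2Pairing (derivative p) q :=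
  integral_mul_deriv_eq_deriv_mul (fun x _ => p.hasDerivAt x) (fun x _ => q.hasDerivAt x)
    (Continuous.intervalIntegrable (by fun_prop) _ _)
    (Continuous.intervalIntegrable (by fun_prop) _ _)

theorem Polynomial.eval_iterate_derivative_X_sq_sub_one_pow {R : Type*} [CommRing R] {n j : ℕ}
    (hj : j < n) {x : R} (hx : x ^ 2 = 1) :
    (derivative^[j] ((X ^ 2 - 1 : R[X]) ^ n)).eval x = 0 := by
  obtain ⟨g, hg⟩ := pow_sub_dvd_iterate_derivative_pow (X ^ 2 - 1 : R[X]) n j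
  simp [hg, hx, zero_pow (by omega : n - j ≠ 0)]

theorem l2Pairing_iterate_derivative_right {g : ℝ[X]} (m : ℕ)
    (hg : ∀ j < m, (derivative^[j] g).eval 1 = 0 ∧ (derivative^[j] g).eval (-1) = 0)
    (f : ℝ[X]) :
    l2Pairing f (derivative^[m] g) = (-1) ^ m * l2Pairing (derivative^[m] f) g := by
  induction m generalizing f with
  | zero => simp
  | succ m ih =>
    obtain ⟨hg_one, hg_neg_one⟩ := hg m m.lt_succ_self
    rw [Function.iterate_succ_apply', l2Pairing_derivative_right, hg_one, hg_neg_one,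
      ih (fun j hj => hg j (hj.trans m.lt_succ_self)), Function.iterate_succ_apply, pow_succ]
    ring

noncomputable def legendrePoly (n : ℕ) : ℝ[X] :=
  (1 / (2 ^ n * n ! : ℝ)) • derivative^[n] ((X ^ 2 - 1) ^ n)

theorem legendreP_eq_eval (n : ℕ) : legendreP n = fun z => (legendrePoly n).eval z := by
  have hW : (fun x : ℝ => (x ^ 2 - 1) ^ n) = fun x => ((X ^ 2 - 1 : ℝ[X]) ^ n).eval x := by
    simp
  ext z
  rw [legendreP, hW, iteratedDeriv_eval]
  simp [legendrePoly]

theorem natDegree_X_sq_sub_one : (X ^ 2 - 1 : ℝ[X]).natDegree = 2 := by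
  simpa using natDegree_X_pow_sub_C (n := 2) (r := (1 : ℝ))

theorem natDegree_legendrePoly_le (n : ℕ) : (legendrePoly n).natDegree ≤ n := by
  refine (natDegree_smul_le _ _).trans <| (natDegree_iterate_derivative _ _).trans ?_
  rw [natDegree_pow, natDegree_X_sq_sub_one]
  omega

theorem coeff_legendrePoly_self (n : ℕ) :
    (legendrePoly n).coeff n = (2 * n)! / (2 ^ n * n ! ^ 2) := by
  have hmonic : ((X ^ 2 - 1 : ℝ[X]) ^ n).Monic := by
    simpa using (monic_X_pow_sub_C (1 : ℝ) two_ne_zero).pow n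
  have hlead : ((X ^ 2 - 1 : ℝ[X]) ^ n).coeff (n + n) = 1 := by
    simpa [natDegree_X_sq_sub_one, mul_two] using hmonic.coeff_natDegree
  have hdesc : ((n + n - n)! * (n + n).descFactorial n : ℝ) = (2 * n)! := by
    rw [two_mul]; exact_mod_cast factorial_mul_descFactorial (le_add_left le_rfl)
  rw [Nat.add_sub_cancel] at hdesc
  rw [legendrePoly, coeff_smul, coeff_iterate_derivative, hlead, nsmul_eq_mul, mul_one,
    smul_eq_mul, ← hdesc]
  field_simp

theorem l2Pairing_legendrePoly_eq_zero {q : ℝ[X]} {n : ℕ} (hq : q.degree < n) :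
    l2Pairing q (legendrePoly n) = 0 := by
  rw [legendrePoly, map_smul, l2Pairing_iterate_derivative_right n
    (fun j hj => ⟨eval_iterate_derivative_X_sq_sub_one_pow hj (one_pow 2),
      eval_iterate_derivative_X_sq_sub_one_pow hj (by norm_num)⟩),
    iterate_derivative_eq_zero_of_degree_lt hq]
  simp

theorem legendrePoly_comp_neg_X (n : ℕ) :
    (legendrePoly n).comp (-X) = (-1) ^ n * legendrePoly n := by
  have hW : ((X ^ 2 - 1 : ℝ[X]) ^ n).comp (-X) = (X ^ 2 - 1) ^ n := by simp
  have h := iterate_derivative_comp_neg_X ((X ^ 2 - 1 : ℝ[X]) ^ n) n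
  rw [hW] at h
  have hsq : ((-1 : ℝ[X]) ^ n) * (-1) ^ n = 1 := by rw [← mul_pow]; simp
  rw [legendrePoly, smul_comp, mul_smul_comm]
  conv_rhs => rw [h, ← mul_assoc, hsq, one_mul]

theorem Polynomial.eval_neg_eq_eval_comp_neg_X {R : Type*} [CommRing R] (p : R[X]) (x : R) :
    p.eval (-x) = (p.comp (-X)).eval x := by
  simp

theorem X_sq_sub_one_pow_eq_mul (n : ℕ) :
    (X ^ 2 - 1 : ℝ[X]) ^ n = (X - C 1) ^ n * (X - C (-1)) ^ n := by
  rw [← mul_pow]; congr 1; simp; ring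

theorem legendrePoly_eval_one (n : ℕ) : (legendrePoly n).eval 1 = 1 := by
  have h := eval_iterate_derivative_X_sub_C_pow_mul (1 : ℝ) n 0 ((X - C (-1)) ^ n)
  rw [add_zero, ← X_sq_sub_one_pow_eq_mul] at h
  rw [legendrePoly, eval_smul, h]
  simp only [choose_zero_right, cast_one, one_mul, Function.iterate_zero_apply, eval_pow, eval_sub,
    eval_X, eval_C, smul_eq_mul, sub_neg_eq_add, one_add_one_eq_two]
  field_simp

theorem legendrePoly_eval_neg_one (n : ℕ) : (legendrePoly n).eval (-1) = (-1) ^ n := by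
  rw [eval_neg_eq_eval_comp_neg_X, legendrePoly_comp_neg_X]
  simp [legendrePoly_eval_one]

theorem derivative_legendrePoly_eval_one (n : ℕ) :
    (derivative (legendrePoly n)).eval 1 = n * (n + 1) / 2 := by
  have h := eval_iterate_derivative_X_sub_C_pow_mul (1 : ℝ) n 1 ((X - C (-1)) ^ n)
  rw [← X_sq_sub_one_pow_eq_mul] at h
  rw [legendrePoly, derivative_smul, ← Function.iterate_succ_apply' derivative, eval_smul, h,
    Function.iterate_one, derivative_X_sub_C_pow]
  rcases n with _ | m
  · simp
  · simp only [eval_mul, eval_C, eval_pow, eval_sub, eval_X, Nat.add_sub_cancel, choose_one_right,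
      smul_eq_mul]
    have hfac : ((m + 1)! : ℝ) ≠ 0 := by positivity
    push_cast
    field_simp
    ring

theorem derivative_legendrePoly_eval_neg_one (n : ℕ) :
    (derivative (legendrePoly n)).eval (-1) = (-1) ^ (n + 1) * (n * (n + 1) / 2) := by
  have h : (derivative (legendrePoly n)).comp (-X) = -(-1) ^ n * derivative (legendrePoly n) := by
    have := congrArg derivative (legendrePoly_comp_neg_X n)
    rw [derivative_comp, derivative_mul] at this
    simp only [derivative_neg, derivative_X, neg_mul, one_mul, derivative_pow, map_natCast,
      derivative_one, neg_zero, mul_zero, zero_mul, zero_add] at this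
    linear_combination -this
  rw [eval_neg_eq_eval_comp_neg_X, h]
  simp [derivative_legendrePoly_eval_one, pow_succ]

theorem l2Pairing_derivative_legendrePoly {q : ℝ[X]} {m : ℕ} (hq : q.natDegree ≤ m) :
    l2Pairing q (derivative (legendrePoly m)) = q.eval 1 - (-1) ^ m * q.eval (-1) := by
  have hdeg : (derivative q).degree < m := by
    rcases eq_or_ne q 0 with rfl | hq0
    · simp
    · exact (degree_derivative_lt hq0).trans_le (degree_le_of_natDegree_le hq)
  rw [l2Pairing_derivative_right, legendrePoly_eval_one, legendrePoly_eval_neg_one,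
    l2Pairing_legendrePoly_eq_zero hdeg]
  ring

theorem degree_derivative_legendrePoly_succ_sub_lt (n : ℕ) :
    (derivative (legendrePoly (n + 1)) - (2 * n + 1 : ℝ) • legendrePoly n).degree < n := by
  rw [degree_lt_iff_coeff_zero]
  intro m hm
  rcases hm.lt_or_eq with hlt | rfl
  · have h₁ : (derivative (legendrePoly (n + 1))).natDegree < m :=
      ((natDegree_derivative_le _).trans
        (by have := natDegree_legendrePoly_le (n + 1); omega)).trans_lt hlt
    have h₂ := (natDegree_legendrePoly_le n).trans_lt hlt
    rw [coeff_sub, coeff_smul, coeff_eq_zero_of_natDegree_lt h₁, coeff_eq_zero_of_natDegree_lt h₂]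
    simp
  · rw [coeff_sub, coeff_smul, coeff_derivative, coeff_legendrePoly_self, coeff_legendrePoly_self,
      smul_eq_mul, (by ring : 2 * (n + 1) = 2 * n + 1 + 1), factorial_succ, factorial_succ,
      factorial_succ]
    have : (n ! : ℝ) ≠ 0 := by positivity
    push_cast
    field_simp
    ring

theorem l2Pairing_legendrePoly_self (n : ℕ) :
    l2Pairing (legendrePoly n) (legendrePoly n) = 2 / (2 * n + 1) := by
  have hrem := l2Pairing_legendrePoly_eq_zero (degree_derivative_legendrePoly_succ_sub_lt n)
  have hbdry := l2Pairing_derivative_legendrePoly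
    ((natDegree_legendrePoly_le n).trans (Nat.le_add_right n 1))
  rw [l2Pairing_comm, map_sub, map_smul, smul_eq_mul, hbdry, legendrePoly_eval_one,
    legendrePoly_eval_neg_one] at hrem
  have hsign : (-1 : ℝ) ^ (n + 1) * (-1) ^ n = -1 := by
    rw [← pow_add, (by ring : n + 1 + n = 2 * n + 1), pow_succ, pow_mul]; norm_num
  rw [hsign] at hrem
  field_simp
  linear_combination -hrem

noncomputable def tildePoly (n : ℕ) : ℝ[X] :=
  (1 / ((n : ℝ) + 2)) •
    ((n : ℝ) • legendrePoly n - (2 / ((n : ℝ) - 1)) • derivative (legendrePoly (n - 1)))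

theorem tildeP_eq_eval (n : ℕ) (z : ℝ) : tildeP n z = (tildePoly n).eval z := by
  simp [tildeP, tildePoly, legendreP_eq_eval, Polynomial.deriv]

theorem integral_tildeP_mul_tildeP (k n : ℕ) :
    ∫ z in (-1 : ℝ)..1, tildeP k z * tildeP n z = l2Pairing (tildePoly k) (tildePoly n) := by
  simp only [tildeP_eq_eval, l2Pairing_apply]

theorem natDegree_tildePoly_le (n : ℕ) : (tildePoly n).natDegree ≤ n := by
  refine (natDegree_smul_le _ _).trans <| (natDegree_sub_le _ _).trans <| max_le ?_ ?_
  · exact (natDegree_smul_le _ _).trans (natDegree_legendrePoly_le n)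
  · refine (natDegree_smul_le _ _).trans <| (natDegree_derivative_le _).trans ?_
    have := natDegree_legendrePoly_le (n - 1)
    omega

theorem tildePoly_eval_one {n : ℕ} (hn : 2 ≤ n) : (tildePoly n).eval 1 = 0 := by
  obtain ⟨m, rfl⟩ := Nat.exists_eq_add_of_le' (by omega : 1 ≤ n)
  have hm : (m : ℝ) ≠ 0 := by norm_cast; omega
  simp only [tildePoly, eval_smul, eval_sub, smul_eq_mul, Nat.add_sub_cancel,
    legendrePoly_eval_one, derivative_legendrePoly_eval_one]
  push_cast
  rw [add_sub_cancel_right]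
  field_simp
  ring

theorem tildePoly_eval_neg_one {n : ℕ} (hn : 2 ≤ n) : (tildePoly n).eval (-1) = 0 := by
  obtain ⟨m, rfl⟩ := Nat.exists_eq_add_of_le' (by omega : 1 ≤ n)
  have hm : (m : ℝ) ≠ 0 := by norm_cast; omega
  simp only [tildePoly, eval_smul, eval_sub, smul_eq_mul, Nat.add_sub_cancel,
    legendrePoly_eval_neg_one, derivative_legendrePoly_eval_neg_one]
  push_cast
  rw [add_sub_cancel_right]
  field_simp
  ring

theorem l2Pairing_tildePoly_eq_zero {q : ℝ[X]} {n : ℕ} (hq : q.natDegree < n)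
    (h_one : q.eval 1 = 0) (h_neg_one : q.eval (-1) = 0) : l2Pairing q (tildePoly n) = 0 := by
  rw [tildePoly, map_smul, map_sub, map_smul, map_smul,
    l2Pairing_legendrePoly_eq_zero ((degree_le_natDegree).trans_lt (by exact_mod_cast hq)),
    l2Pairing_derivative_legendrePoly (by omega), h_one, h_neg_one]
  simp

theorem l2Pairing_tildePoly_self {n : ℕ} (hn : 2 ≤ n) :
    l2Pairing (tildePoly n) (tildePoly n) =
      2 * n * (n + 1) / ((n - 1) * (n + 2) * (2 * n + 1)) := by
  obtain ⟨m, rfl⟩ := Nat.exists_eq_add_of_le' (by omega : 1 ≤ n)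
  have hm : (m : ℝ) ≠ 0 := by norm_cast; omega
  have hdeg : (derivative (legendrePoly m)).natDegree ≤ m :=
    (natDegree_derivative_le _).trans (by have := natDegree_legendrePoly_le m; omega)
  have hDL : l2Pairing (derivative (legendrePoly m)) (legendrePoly (m + 1)) = 0 :=
    l2Pairing_legendrePoly_eq_zero
      (degree_le_natDegree.trans_lt (by exact_mod_cast hdeg.trans_lt m.lt_succ_self))
  have hDD : l2Pairing (derivative (legendrePoly m)) (derivative (legendrePoly m)) =
      m * (m + 1) := by
    have hsq : (-1 : ℝ) ^ m * (-1) ^ m = 1 := by rw [← mul_pow]; norm_num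
    rw [l2Pairing_derivative_legendrePoly hdeg, derivative_legendrePoly_eval_one,
      derivative_legendrePoly_eval_neg_one]
    linear_combination (m * (m + 1) / 2 : ℝ) * hsq
  simp only [tildePoly, map_smul, map_sub, LinearMap.smul_apply, LinearMap.sub_apply, smul_eq_mul,
    Nat.add_sub_cancel]
  rw [l2Pairing_comm (legendrePoly (m + 1)) (derivative (legendrePoly m)), hDL, hDD,
    l2Pairing_legendrePoly_self]
  push_cast
  rw [add_sub_cancel_right]
  field_simp
  ring

/-- Orthogonality of the polynomials `P̃_n`:
`∫_{-1}^{1} P̃_k P̃_n dz = c_n δ_{kn}` with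
`c_n = 2n(n+1) / ((n-1)(n+2)(2n+1))`. -/
theorem tildeP_orthogonality (k n : ℕ) (hk : 2 ≤ k) (hn : 2 ≤ n) :
    ∫ z in (-1 : ℝ)..1, tildeP k z * tildeP n z =
      if k = n then
        (2 * (n : ℝ) * ((n : ℝ) + 1)) /
          (((n : ℝ) - 1) * ((n : ℝ) + 2) * (2 * (n : ℝ) + 1))
      else 0 := by
  rw [integral_tildeP_mul_tildeP]
  split_ifs with hkn
  · subst hkn
    exact l2Pairing_tildePoly_self hn
  · rcases lt_or_gt_of_ne hkn with hlt | hgt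
    · exact l2Pairing_tildePoly_eq_zero ((natDegree_tildePoly_le k).trans_lt hlt)
        (tildePoly_eval_one hk) (tildePoly_eval_neg_one hk)
    · rw [l2Pairing_comm]
      exact l2Pairing_tildePoly_eq_zero ((natDegree_tildePoly_le n).trans_lt hgt)
        (tildePoly_eval_one hn) (tildePoly_eval_neg_one hn)
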